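/- Let F be a field, h ∈ F[x] nonzero, and A_h the F-algebra generated by x, ŷ with ŷx - xŷ = h. For any nonzero f ∈ F[x], the set Σ = {fⁿ : n ≥ 0} is a left and right Ore set of regular elements in A_h. -/
import Mathlib

open Polynomial FreeAlgebra

/-- The defining relation of `A_h`: `y * x = x * y + h(x)`. -/
inductive ahRel (F : Type) [Field F] (h : F[X]) :
    FreeAlgebra F (Fin 2) → FreeAlgebra F (Fin 2) → Prop
  | rel : ahRel F h (ι F 1 * ι F 0) (ι F 0 * ι F 1 + aeval (ι F 0) h)

/-- The algebra `A_h` generated by `x, y` with `yx - xy = h(x)`. -/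
noncomputable abbrev AW (F : Type) [Field F] (h : F[X]) := RingQuot (ahRel F h)

/-- The generator `x` of `A_h`. -/
noncomputable def aX (F : Type) [Field F] (h : F[X]) : AW F h :=
  RingQuot.mkAlgHom F (ahRel F h) (ι F 0)

/-- The generator `y` of `A_h`. -/
noncomputable def aY (F : Type) [Field F] (h : F[X]) : AW F h :=
  RingQuot.mkAlgHom F (ahRel F h) (ι F 1)

namespace AhAux

variable (F : Type) [Field F] (h : F[X])

/-- The polynomial ring `F[y][x]`; outer variable is `x`, inner is `y`. -/
abbrev RR (F : Type) [Field F] := Polynomial (Polynomial F)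

/-- Differentiation w.r.t. the outer variable `x`, as an `F`-linear endomorphism. -/
noncomputable def Dx : Module.End F (RR F) :=
  (Polynomial.derivative (R := Polynomial F)).restrictScalars F

@[simp] lemma Dx_apply (q : RR F) : Dx F q = derivative q := rfl

/-- Left multiplication by `x`. -/
noncomputable def Lx : Module.End F (RR F) := Algebra.lmul F (RR F) X

/-- The action of `y`: multiplication by the inner variable plus `h(x)·d/dx`. -/
noncomputable def Ly : Module.End F (RR F) :=
  Algebra.lmul F (RR F) (C X) + Algebra.lmul F (RR F) (aeval X h) * Dx F

@[simp] lemma Lx_apply (q : RR F) : Lx F q = X * q := rfl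

lemma Ly_apply (q : RR F) : Ly F h q = C X * q + aeval X h * derivative q := rfl

lemma rel_end : Ly F h * Lx F = Lx F * Ly F h + aeval (Lx F) h := by
  have hH : aeval (Lx F) h = Algebra.lmul F (RR F) (aeval X h) :=
    aeval_algHom_apply (Algebra.lmul F (RR F)) X h
  rw [hH]
  ext q
  simp only [Module.End.mul_apply, LinearMap.add_apply, Lx_apply, Ly_apply,
    Algebra.coe_lmul_eq_mul, LinearMap.mul_apply']
  rw [derivative_mul, derivative_X]
  ring


/-- The faithful representation of `A_h` on `F[y][x]`. -/
noncomputable def phi : AW F h →ₐ[F] Module.End F (RR F) :=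
  RingQuot.liftAlgHom F ⟨FreeAlgebra.lift F ![Lx F, Ly F h], by
    rintro a b ⟨⟩
    simp only [map_mul, map_add, lift_ι_apply, Matrix.cons_val_zero, Matrix.cons_val_one,
      Matrix.head_cons]
    rw [← aeval_algHom_apply, lift_ι_apply, Matrix.cons_val_zero, rel_end]⟩

lemma phi_aX : phi F h (aX F h) = Lx F := by
  rw [aX, phi, RingQuot.liftAlgHom_mkAlgHom_apply]
  simp [lift_ι_apply]

lemma phi_aY : phi F h (aY F h) = Ly F h := by
  rw [aY, phi, RingQuot.liftAlgHom_mkAlgHom_apply]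
  simp [lift_ι_apply]

/-- Evaluation of the representation at `1`. -/
noncomputable def ev (a : AW F h) : RR F := phi F h a 1

lemma ev_one : ev F h 1 = 1 := by simp [ev]

lemma ev_add (a b : AW F h) : ev F h (a + b) = ev F h a + ev F h b := by simp [ev]

lemma ev_smul (c : F) (a : AW F h) : ev F h (c • a) = c • ev F h a := by simp [ev]

lemma ev_aX_mul (a : AW F h) : ev F h (aX F h * a) = Lx F (ev F h a) := by
  simp [ev, map_mul, Module.End.mul_apply, phi_aX]

lemma ev_aY_mul (a : AW F h) : ev F h (aY F h * a) = Ly F h (ev F h a) := by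
  simp [ev, map_mul, Module.End.mul_apply, phi_aY]


lemma aeval_comm (g₁ g₂ : F[X]) :
    aeval (aX F h) g₁ * aeval (aX F h) g₂ = aeval (aX F h) g₂ * aeval (aX F h) g₁ := by
  rw [← map_mul, ← map_mul, mul_comm]

lemma aX_comm (g : F[X]) :
    aX F h * aeval (aX F h) g = aeval (aX F h) g * aX F h := by
  simpa using aeval_comm F h X g

open MulOpposite in
/-- The inverse normal-form map sending `x^j y^i` (read from `F[y][x]`) to `x^j * y^i`. -/
noncomputable def psi (q : RR F) : AW F h :=
  unop (eval₂ ((aeval (op (aY F h))).toRingHom : Polynomial F →+* (AW F h)ᵐᵒᵖ)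
    (op (aX F h)) q)

open MulOpposite

lemma psi_zero : psi F h 0 = 0 := by simp [psi]

lemma psi_one : psi F h 1 = 1 := by simp [psi]

lemma psi_add (q r : RR F) : psi F h (q + r) = psi F h q + psi F h r := by
  simp [psi, eval₂_add]

lemma psi_smul (c : F) (q : RR F) : psi F h (c • q) = c • psi F h q := by
  rw [psi, ← IsScalarTower.algebraMap_smul (Polynomial F) c q, eval₂_smul]
  simp only [AlgHom.toRingHom_eq_coe, RingHom.coe_coe, AlgHom.commutes]
  rw [← Algebra.smul_def]
  simp [psi]

lemma psi_C (r : Polynomial F) :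
    psi F h (C r) = unop (aeval (op (aY F h)) r) := by
  simp [psi, eval₂_C]

lemma psi_mul_X (q : RR F) : psi F h (q * X) = aX F h * psi F h q := by
  rw [psi, eval₂_mul_X]
  simp [psi]

lemma psi_aevalX_mul (g : F[X]) (q : RR F) :
    psi F h (aeval X g * q) = aeval (aX F h) g * psi F h q := by
  induction g using Polynomial.induction_on generalizing q with
  | C a =>
      rw [aeval_C, aeval_C, ← Algebra.smul_def, ← Algebra.smul_def, psi_smul]
  | add p r hp hr =>
      rw [map_add, add_mul, psi_add, hp, hr, map_add, add_mul]
  | monomial n a ih =>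
      have e1 : C a * X ^ (n + 1) = C a * X ^ n * X := by ring
      rw [e1, map_mul, aeval_X, mul_comm (aeval X (C a * X ^ n)) X, mul_assoc, ← eq_comm,
        map_mul, aeval_X]
      rw [mul_comm (X : RR F) (aeval X (C a * X ^ n) * q), psi_mul_X, ih, ← mul_assoc, aX_comm]

lemma rel_AW : aY F h * aX F h = aX F h * aY F h + aeval (aX F h) h := by
  have := RingQuot.mkAlgHom_rel F (ahRel.rel (F := F) (h := h))
  simp only [map_mul, map_add] at this
  rw [← aX, ← aY, ← aeval_algHom_apply, ← aX] at this
  exact this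

lemma comm_AW (g : F[X]) :
    aY F h * aeval (aX F h) g
      = aeval (aX F h) g * aY F h + aeval (aX F h) (derivative g * h) := by
  induction g using Polynomial.induction_on with
  | C a =>
      rw [aeval_C, derivative_C, zero_mul, map_zero, add_zero, Algebra.commutes]
  | add p r hp hr =>
      rw [map_add, mul_add, hp, hr]
      simp only [derivative_add, add_mul, map_add]
      abel
  | monomial n a ih =>
      have e1 : C a * X ^ (n + 1) = C a * X ^ n * X := by ring
      have e2 : derivative (C a * X ^ n * X) * h
          = derivative (C a * X ^ n) * h * X + C a * X ^ n * h := by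
        rw [derivative_mul, derivative_X]; ring
      rw [e1, map_mul, aeval_X, ← mul_assoc, ih, add_mul,
        mul_assoc ((aeval (aX F h)) (C a * X ^ n)), rel_AW, e2]
      simp only [mul_add, map_add, map_mul, aeval_X, ← mul_assoc]
      abel

lemma psi_Lx (q : RR F) : psi F h (Lx F q) = aX F h * psi F h q := by
  rw [Lx_apply, mul_comm, psi_mul_X]

lemma psi_Ly (q : RR F) : psi F h (Ly F h q) = aY F h * psi F h q := by
  induction q using Polynomial.induction_on with
  | C r =>
      rw [Ly_apply, derivative_C, mul_zero, add_zero, ← C_mul, psi_C, psi_C, map_mul,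
        aeval_X, MulOpposite.unop_mul, MulOpposite.unop_op]
      have hc := congrArg MulOpposite.unop
        (congrArg (aeval (MulOpposite.op (aY F h))) (mul_comm (X : Polynomial F) r))
      simpa [map_mul] using hc
  | add p r hp hr =>
      rw [map_add, psi_add, hp, hr, psi_add, mul_add]
  | monomial n a ih =>
      have key : ∀ q : RR F, psi F h (Ly F h q) = aY F h * psi F h q →
          psi F h (Ly F h (q * X)) = aY F h * psi F h (q * X) := by
        intro q ih
        have e1 : Ly F h (q * X) = Ly F h q * X + aeval X h * q := by
          rw [Ly_apply, Ly_apply, derivative_mul, derivative_X]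
          ring
        rw [e1, psi_add, psi_mul_X, ih, psi_aevalX_mul, psi_mul_X, ← mul_assoc, ← mul_assoc,
          rel_AW, add_mul]
      have e0 : (C a * X ^ (n + 1) : RR F) = C a * X ^ n * X := by ring
      rw [e0]
      exact key _ ih

lemma psi_ev_aux (b : FreeAlgebra F (Fin 2)) :
    ∀ a : AW F h, psi F h (ev F h a) = a →
      psi F h (ev F h (RingQuot.mkAlgHom F (ahRel F h) b * a))
        = RingQuot.mkAlgHom F (ahRel F h) b * a := by
  induction b using FreeAlgebra.induction with
  | grade0 r =>
      intro a ha
      rw [AlgHom.commutes, ← Algebra.smul_def, ev_smul, psi_smul, ha]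
  | grade1 i =>
      intro a ha
      fin_cases i <;> simp only [Fin.isValue, Fin.mk_one, Fin.zero_eta]
      · rw [show RingQuot.mkAlgHom F (ahRel F h) (ι F 0) = aX F h from rfl,
          ev_aX_mul, psi_Lx, ha]
      · rw [show RingQuot.mkAlgHom F (ahRel F h) (ι F 1) = aY F h from rfl,
          ev_aY_mul, psi_Ly, ha]
  | mul x y ihx ihy =>
      intro a ha
      rw [map_mul, mul_assoc]
      exact ihx _ (ihy _ ha)
  | add x y ihx ihy =>
      intro a ha
      rw [map_add, add_mul, ev_add, psi_add, ihx _ ha, ihy _ ha]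

lemma psi_ev (a : AW F h) : psi F h (ev F h a) = a := by
  obtain ⟨b, rfl⟩ := RingQuot.mkAlgHom_surjective F (ahRel F h) a
  have h1 : psi F h (ev F h 1) = 1 := by rw [ev_one, psi_one]
  simpa using psi_ev_aux F h b 1 h1

lemma phi_aeval (g : F[X]) :
    phi F h (aeval (aX F h) g) = Algebra.lmul F (RR F) (aeval X g) := by
  rw [← aeval_algHom_apply, phi_aX]
  exact aeval_algHom_apply (Algebra.lmul F (RR F)) X g

lemma ev_pow_mul (g : F[X]) (n : ℕ) (a : AW F h) :
    ev F h (aeval (aX F h) g ^ n * a) = (aeval X g : RR F) ^ n * ev F h a := by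
  rw [ev, map_mul, map_pow, phi_aeval, ← map_pow, Module.End.mul_apply]
  rfl

lemma aevalX_ne (g : F[X]) (hg : g ≠ 0) : (aeval (X : RR F) g) ≠ 0 := by
  intro h0
  apply hg
  have e := congrArg (AlgHom.restrictScalars F (aeval (X : Polynomial F))) h0
  rw [← aeval_algHom_apply] at e
  simpa using e

lemma left_reg (g : F[X]) (hg : g ≠ 0) (n : ℕ) :
    IsLeftRegular (aeval (aX F h) g ^ n) := by
  intro a b hab
  have e : (aeval X g : RR F) ^ n * ev F h a = (aeval X g : RR F) ^ n * ev F h b := by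
    simp only [← ev_pow_mul]
    exact congrArg (ev F h) hab
  have e2 := mul_left_cancel₀ (pow_ne_zero n (aevalX_ne F g hg)) e
  rw [← psi_ev F h a, ← psi_ev F h b, e2]

lemma op_aeval {A : Type*} [Ring A] [Algebra F A] (z : A) (p : F[X]) :
    aeval (MulOpposite.op z) p = MulOpposite.op (aeval z p) := by
  induction p using Polynomial.induction_on with
  | C a => simp [aeval_C, MulOpposite.algebraMap_apply]
  | add p r hp hr => rw [map_add, hp, hr, map_add, MulOpposite.op_add]
  | monomial n a ih =>
      have e1 : (C a * X ^ (n + 1) : F[X]) = C a * X ^ n * X := by ring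
      have comm : z * (aeval z (C a : F[X]) * aeval z (X ^ n : F[X]))
          = aeval z (C a : F[X]) * aeval z (X ^ n : F[X]) * z := by
        simp only [aeval_C, map_pow, aeval_X]
        rw [← mul_assoc, ← Algebra.commutes a z, mul_assoc, mul_assoc, ← pow_succ, ← pow_succ']
      rw [e1, map_mul, aeval_X, ih, ← MulOpposite.op_mul]
      simp only [map_mul, aeval_X]
      exact congrArg _ comm

lemma neg_rel : aX F h * -aY F h = -aY F h * aX F h + aeval (aX F h) h := by
  have e1 : aX F h * -aY F h = -(aX F h * aY F h) := by exact mul_neg (aX F h) (aY F h)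
  have e2 : -aY F h * aX F h = -(aY F h * aX F h) := by exact neg_mul (aY F h) (aX F h)
  rw [e1, e2, rel_AW]
  abel

/-- The anti-automorphism `x ↦ x`, `y ↦ -y` of `A_h`, as a hom to the opposite algebra. -/
noncomputable def tau : AW F h →ₐ[F] (AW F h)ᵐᵒᵖ :=
  RingQuot.liftAlgHom F ⟨FreeAlgebra.lift F
      ![MulOpposite.op (aX F h), MulOpposite.op (-aY F h)], by
    rintro a b ⟨⟩
    simp only [map_mul, map_add, lift_ι_apply, Matrix.cons_val_zero, Matrix.cons_val_one,
      Matrix.head_cons]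
    rw [← aeval_algHom_apply, lift_ι_apply, Matrix.cons_val_zero, op_aeval,
      ← MulOpposite.op_mul, ← MulOpposite.op_mul, ← MulOpposite.op_add]
    apply congrArg
    exact neg_rel F h⟩

lemma tau_aX : tau F h (aX F h) = MulOpposite.op (aX F h) := by
  rw [aX, tau, RingQuot.liftAlgHom_mkAlgHom_apply]
  simp [lift_ι_apply, aX]

lemma tau_aY : tau F h (aY F h) = MulOpposite.op (-aY F h) := by
  rw [aY, tau, RingQuot.liftAlgHom_mkAlgHom_apply]
  simp [lift_ι_apply, aY]

lemma tau_tau (a : AW F h) :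
    MulOpposite.unop (tau F h (MulOpposite.unop (tau F h a))) = a := by
  have key : ∀ b : FreeAlgebra F (Fin 2),
      MulOpposite.unop (tau F h (MulOpposite.unop (tau F h
        (RingQuot.mkAlgHom F (ahRel F h) b))))
        = RingQuot.mkAlgHom F (ahRel F h) b := by
    intro b
    induction b using FreeAlgebra.induction with
    | grade0 r => simp [AlgHom.commutes, MulOpposite.algebraMap_apply]
    | grade1 i =>
        fin_cases i <;> simp only [Fin.isValue, Fin.mk_one, Fin.zero_eta]
        · rw [show RingQuot.mkAlgHom F (ahRel F h) (ι F 0) = aX F h from rfl, tau_aX,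
            MulOpposite.unop_op, tau_aX, MulOpposite.unop_op]
        · rw [show RingQuot.mkAlgHom F (ahRel F h) (ι F 1) = aY F h from rfl, tau_aY,
            MulOpposite.unop_op, map_neg, tau_aY]
          simp
    | mul x y ihx ihy =>
        rw [map_mul, map_mul, MulOpposite.unop_mul, map_mul, MulOpposite.unop_mul, ihx, ihy]
    | add x y ihx ihy =>
        rw [map_add, map_add, MulOpposite.unop_add, map_add, MulOpposite.unop_add, ihx, ihy]
  obtain ⟨b, rfl⟩ := RingQuot.mkAlgHom_surjective F (ahRel F h) a
  exact key b

lemma tau_injective : Function.Injective (tau F h) :=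
  Function.LeftInverse.injective (g := fun z => MulOpposite.unop (tau F h (MulOpposite.unop z)))
    (tau_tau F h)

lemma tau_aeval (g : F[X]) :
    tau F h (aeval (aX F h) g) = MulOpposite.op (aeval (aX F h) g) := by
  rw [← aeval_algHom_apply, tau_aX, op_aeval]

lemma right_reg (g : F[X]) (hg : g ≠ 0) (n : ℕ) :
    IsRightRegular (aeval (aX F h) g ^ n) := by
  intro a b hab
  have e : tau F h a * MulOpposite.op (aeval (aX F h) g ^ n)
      = tau F h b * MulOpposite.op (aeval (aX F h) g ^ n) := by
    have := congrArg (tau F h) hab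
    simp only [map_mul, map_pow, tau_aeval, ← MulOpposite.op_pow] at this
    exact this
  have e2 := congrArg MulOpposite.unop e
  simp only [MulOpposite.unop_mul, MulOpposite.unop_op] at e2
  have e3 := left_reg F h g hg n e2
  exact tau_injective F h (MulOpposite.unop_injective e3)

lemma right_ore (f : F[X]) :
    ∀ (a : AW F h) (n : ℕ), ∃ (a₁ : AW F h) (m : ℕ),
      a * aeval (aX F h) f ^ m = aeval (aX F h) f ^ n * a₁ := by
  suffices H : ∀ b : FreeAlgebra F (Fin 2), ∀ n : ℕ, ∃ (a₁ : AW F h) (m : ℕ),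
      RingQuot.mkAlgHom F (ahRel F h) b * aeval (aX F h) f ^ m
        = aeval (aX F h) f ^ n * a₁ by
    intro a n
    obtain ⟨b, rfl⟩ := RingQuot.mkAlgHom_surjective F (ahRel F h) a
    exact H b n
  intro b
  induction b using FreeAlgebra.induction with
  | grade0 r =>
      intro n
      refine ⟨algebraMap F (AW F h) r, n, ?_⟩
      rw [AlgHom.commutes]
      exact Algebra.commutes r _
  | grade1 i =>
      fin_cases i <;> simp only [Fin.isValue, Fin.mk_one, Fin.zero_eta]
      · intro n
        refine ⟨aX F h, n, ?_⟩
        rw [show RingQuot.mkAlgHom F (ahRel F h) (ι F 0) = aX F h from rfl]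
        have := aX_comm F h (f ^ n)
        rwa [map_pow] at this
      · intro n
        refine ⟨aeval (aX F h) f * aY F h
          + aeval (aX F h) (C ((n : F) + 1) * derivative f * h), n + 1, ?_⟩
        rw [show RingQuot.mkAlgHom F (ahRel F h) (ι F 1) = aY F h from rfl]
        have hc := comm_AW F h (f ^ (n + 1))
        rw [derivative_pow_succ] at hc
        have e : (C ((n : F) + 1) * f ^ n * derivative f) * h
            = f ^ n * (C ((n : F) + 1) * derivative f * h) := by ring
        rw [e, map_mul, map_pow, map_pow] at hc
        calc RingQuot.mkAlgHom F (ahRel F h) (ι F 1) * aeval (aX F h) f ^ (n + 1)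
            = aY F h * aeval (aX F h) f ^ (n + 1) := rfl
          _ = aeval (aX F h) f ^ (n + 1) * aY F h
              + aeval (aX F h) f ^ n * aeval (aX F h) (C ((n : F) + 1) * derivative f * h) :=
            hc
          _ = aeval (aX F h) f ^ n * (aeval (aX F h) f * aY F h
              + aeval (aX F h) (C ((n : F) + 1) * derivative f * h)) := by
            rw [pow_succ, mul_assoc, ← mul_add]
  | mul x y ihx ihy =>
      intro n
      obtain ⟨a₁, m₂, ha⟩ := ihx n
      obtain ⟨b₁, m₁, hb⟩ := ihy m₂
      exact ⟨a₁ * b₁, m₁, by rw [map_mul, mul_assoc, hb, ← mul_assoc, ha, mul_assoc]⟩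
  | add x y ihx ihy =>
      intro n
      obtain ⟨a₁, m, ha⟩ := ihx n
      obtain ⟨b₁, m', hb⟩ := ihy n
      refine ⟨a₁ * aeval (aX F h) f ^ (max m m' - m) + b₁ * aeval (aX F h) f ^ (max m m' - m'),
        max m m', ?_⟩
      have hm : aeval (aX F h) f ^ max m m'
          = aeval (aX F h) f ^ m * aeval (aX F h) f ^ (max m m' - m) := by
        rw [← pow_add, Nat.add_sub_cancel' (le_max_left m m')]
      have hm' : aeval (aX F h) f ^ max m m'
          = aeval (aX F h) f ^ m' * aeval (aX F h) f ^ (max m m' - m') := by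
        rw [← pow_add, Nat.add_sub_cancel' (le_max_right m m')]
      rw [map_add, add_mul, mul_add]
      congr 1
      · rw [hm, ← mul_assoc, ha, mul_assoc]
      · rw [hm', ← mul_assoc, hb, mul_assoc]

lemma left_ore (f : F[X]) :
    ∀ (a : AW F h) (n : ℕ), ∃ (a₁ : AW F h) (m : ℕ),
      aeval (aX F h) f ^ m * a = a₁ * aeval (aX F h) f ^ n := by
  suffices H : ∀ b : FreeAlgebra F (Fin 2), ∀ n : ℕ, ∃ (a₁ : AW F h) (m : ℕ),
      aeval (aX F h) f ^ m * RingQuot.mkAlgHom F (ahRel F h) b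
        = a₁ * aeval (aX F h) f ^ n by
    intro a n
    obtain ⟨b, rfl⟩ := RingQuot.mkAlgHom_surjective F (ahRel F h) a
    exact H b n
  intro b
  induction b using FreeAlgebra.induction with
  | grade0 r =>
      intro n
      refine ⟨algebraMap F (AW F h) r, n, ?_⟩
      rw [AlgHom.commutes]
      exact (Algebra.commutes r _).symm
  | grade1 i =>
      fin_cases i <;> simp only [Fin.isValue, Fin.mk_one, Fin.zero_eta]
      · intro n
        refine ⟨aX F h, n, ?_⟩
        rw [show RingQuot.mkAlgHom F (ahRel F h) (ι F 0) = aX F h from rfl]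
        have := aX_comm F h (f ^ n)
        rw [map_pow] at this
        exact this.symm
      · intro n
        refine ⟨aY F h * aeval (aX F h) f
          - aeval (aX F h) (C ((n : F) + 1) * derivative f * h), n + 1, ?_⟩
        rw [show RingQuot.mkAlgHom F (ahRel F h) (ι F 1) = aY F h from rfl]
        have hc := comm_AW F h (f ^ (n + 1))
        rw [derivative_pow_succ] at hc
        have e : (C ((n : F) + 1) * f ^ n * derivative f) * h
            = (C ((n : F) + 1) * derivative f * h) * f ^ n := by ring
        rw [e, map_mul, map_pow, map_pow] at hc
        have hs : (aY F h * aeval (aX F h) f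
              - aeval (aX F h) (C ((n : F) + 1) * derivative f * h))
              * aeval (aX F h) f ^ n
            = aY F h * aeval (aX F h) f * aeval (aX F h) f ^ n
              - aeval (aX F h) (C ((n : F) + 1) * derivative f * h)
                * aeval (aX F h) f ^ n := by
          exact sub_mul _ _ _
        rw [hs, mul_assoc, ← pow_succ']
        exact eq_sub_of_add_eq hc.symm
  | mul x y ihx ihy =>
      intro n
      obtain ⟨b₁, m₁, hb⟩ := ihy n
      obtain ⟨a₁, m₂, ha⟩ := ihx m₁
      exact ⟨a₁ * b₁, m₂, by rw [map_mul, ← mul_assoc, ha, mul_assoc, hb, ← mul_assoc]⟩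
  | add x y ihx ihy =>
      intro n
      obtain ⟨a₁, m, ha⟩ := ihx n
      obtain ⟨b₁, m', hb⟩ := ihy n
      refine ⟨aeval (aX F h) f ^ (max m m' - m) * a₁ + aeval (aX F h) f ^ (max m m' - m') * b₁,
        max m m', ?_⟩
      have hm : aeval (aX F h) f ^ max m m'
          = aeval (aX F h) f ^ (max m m' - m) * aeval (aX F h) f ^ m := by
        rw [← pow_add, Nat.sub_add_cancel (le_max_left m m')]
      have hm' : aeval (aX F h) f ^ max m m'
          = aeval (aX F h) f ^ (max m m' - m') * aeval (aX F h) f ^ m' := by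
        rw [← pow_add, Nat.sub_add_cancel (le_max_right m m')]
      rw [map_add, mul_add, add_mul]
      congr 1
      · rw [hm, mul_assoc, ha, ← mul_assoc]
      · rw [hm', mul_assoc, hb, ← mul_assoc]

end AhAux

/-- For nonzero `f ∈ F[x]`, the set `Σ = {fⁿ}` is a left and right Ore set of regular
elements in `A_h`: every power of `f(x)` is regular, and for each `a ∈ A_h` and `n` there
exist `a₁` and `m` with `a·f(x)ᵐ = f(x)ⁿ·a₁` (right Ore) and `f(x)ᵐ·a = a₁·f(x)ⁿ` (left Ore). -/
theorem stmt4 (F : Type) [Field F] (h f : F[X]) (hh : h ≠ 0) (hf : f ≠ 0) :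
    (∀ n : ℕ, IsRegular (aeval (aX F h) f ^ n)) ∧
    (∀ (a : AW F h) (n : ℕ), ∃ (a₁ : AW F h) (m : ℕ),
        a * aeval (aX F h) f ^ m = aeval (aX F h) f ^ n * a₁) ∧
    (∀ (a : AW F h) (n : ℕ), ∃ (a₁ : AW F h) (m : ℕ),
        aeval (aX F h) f ^ m * a = a₁ * aeval (aX F h) f ^ n) := by
  exact ⟨fun n => ⟨AhAux.left_reg F h f hf n, AhAux.right_reg F h f hf n⟩,
    AhAux.right_ore F h f, AhAux.left_ore F h f⟩
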